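/- arXiv:2206.14537 — 2 statements merged into one kernel-verified Lean document; each statement's English description precedes it below -/
import Mathlib

section
/- Let P ∈ ℝ^{N×N}, let X ∈ ℝ^{N×m} and Λ ∈ ℝ^{m×m} satisfy the invariant subspace condition P·X = X·Λ, let D ∈ ℝ^{N×N} be a diagonal matrix with positive diagonal entries satisfying the orthonormality relation Xᵀ·D²·X = I, and let χ = X·A for an invertible matrix A ∈ ℝ^{m×m}. Then χᵀ·D²·χ = Aᵀ·A, this matrix is invertible, and the coarse-grained matrix P_c := (χᵀ·D²·χ)⁻¹·χᵀ·D²·P·χ satisfies P_c = A⁻¹·Λ·A. -/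
open Matrix

/-- With `P·X = X·Λ`, a diagonal `D` with positive diagonal satisfying
`Xᵀ·D²·X = I`, and `χ = X·A` for invertible `A`, one has `χᵀ·D²·χ = Aᵀ·A`, this matrix is
invertible, and the coarse-grained matrix `P_c = (χᵀ·D²·χ)⁻¹·χᵀ·D²·P·χ` equals `A⁻¹·Λ·A`. -/
theorem stmt_8 (N m : ℕ) (P : Matrix (Fin N) (Fin N) ℝ)
    (X : Matrix (Fin N) (Fin m) ℝ) (Λ : Matrix (Fin m) (Fin m) ℝ)
    (hinv : P * X = X * Λ)
    (d : Fin N → ℝ) (hd : ∀ i, 0 < d i)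
    (D : Matrix (Fin N) (Fin N) ℝ) (hD : D = Matrix.diagonal d)
    (horth : Xᵀ * D ^ 2 * X = 1)
    (A : Matrix (Fin m) (Fin m) ℝ) (hA : IsUnit A)
    (χ : Matrix (Fin N) (Fin m) ℝ) (hχ : χ = X * A) :
    χᵀ * D ^ 2 * χ = Aᵀ * A ∧ IsUnit (χᵀ * D ^ 2 * χ) ∧
    (χᵀ * D ^ 2 * χ)⁻¹ * (χᵀ * D ^ 2 * P * χ) = A⁻¹ * Λ * A := by
  subst hχ
  have hAd : IsUnit A.det := (Matrix.isUnit_iff_isUnit_det A).mp hA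
  have hATd : IsUnit Aᵀ.det := by rwa [Matrix.det_transpose]
  have h1 : (X * A)ᵀ * D ^ 2 * (X * A) = Aᵀ * A := by
    rw [Matrix.transpose_mul]
    calc Aᵀ * Xᵀ * D ^ 2 * (X * A) = Aᵀ * (Xᵀ * D ^ 2 * X) * A := by
          simp only [Matrix.mul_assoc]
      _ = Aᵀ * A := by rw [horth, Matrix.mul_one]
  have hUnit : IsUnit (Aᵀ * A) := ((Matrix.isUnit_iff_isUnit_det _).mpr hATd).mul hA
  refine ⟨h1, h1 ▸ hUnit, ?_⟩
  have h2 : (X * A)ᵀ * D ^ 2 * P * (X * A) = Aᵀ * (Λ * A) := by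
    rw [Matrix.transpose_mul]
    calc Aᵀ * Xᵀ * D ^ 2 * P * (X * A)
        = Aᵀ * (Xᵀ * D ^ 2 * (P * X) * A) := by simp only [Matrix.mul_assoc]
      _ = Aᵀ * (Xᵀ * D ^ 2 * (X * Λ) * A) := by rw [hinv]
      _ = Aᵀ * ((Xᵀ * D ^ 2 * X) * (Λ * A)) := by simp only [Matrix.mul_assoc]
      _ = Aᵀ * (Λ * A) := by rw [horth, Matrix.one_mul]
  rw [h1, h2, Matrix.mul_inv_rev, Matrix.mul_assoc, ← Matrix.mul_assoc Aᵀ⁻¹,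
    Matrix.nonsing_inv_mul Aᵀ hATd, Matrix.one_mul, Matrix.mul_assoc]
end

section
/- Let P ∈ ℝ^{N×N}, let X ∈ ℝ^{N×m} and Λ ∈ ℝ^{m×m} satisfy P·X = X·Λ, let D ∈ ℝ^{N×N} be diagonal with positive diagonal entries and Xᵀ·D²·X = I, let χ = X·A for an invertible A ∈ ℝ^{m×m}, and let P_c = (χᵀ·D²·χ)⁻¹·χᵀ·D²·P·χ. Then P·χ = χ·P_c, and consequently P^k·χ = χ·P_c^k for every natural number k; equivalently, (P_cᵀ)^k·χᵀ·η = χᵀ·(Pᵀ)^k·η for every vector η ∈ ℝ^N and every k, i.e., propagation of the projected density commutes with projection of the propagated density. -/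
open Matrix

/-- With `P·X = X·Λ`, `Xᵀ·D²·X = I` for a positive diagonal `D`, `χ = X·A`
for invertible `A`, and `P_c = (χᵀ·D²·χ)⁻¹·χᵀ·D²·P·χ`, one has `P·χ = χ·P_c`, hence
`P^k·χ = χ·P_c^k` for every `k`, equivalently `(P_cᵀ)^k·χᵀ·η = χᵀ·(Pᵀ)^k·η` for every
density vector `η`. -/
theorem stmt_9 (N m : ℕ) (P : Matrix (Fin N) (Fin N) ℝ)
    (X : Matrix (Fin N) (Fin m) ℝ) (Λ : Matrix (Fin m) (Fin m) ℝ)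
    (hinv : P * X = X * Λ)
    (d : Fin N → ℝ) (hd : ∀ i, 0 < d i)
    (D : Matrix (Fin N) (Fin N) ℝ) (hD : D = Matrix.diagonal d)
    (horth : Xᵀ * D ^ 2 * X = 1)
    (A : Matrix (Fin m) (Fin m) ℝ) (hA : IsUnit A)
    (χ : Matrix (Fin N) (Fin m) ℝ) (hχ : χ = X * A)
    (Pc : Matrix (Fin m) (Fin m) ℝ)
    (hPc : Pc = (χᵀ * D ^ 2 * χ)⁻¹ * (χᵀ * D ^ 2 * P * χ)) :
    P * χ = χ * Pc ∧
    (∀ k : ℕ, P ^ k * χ = χ * Pc ^ k) ∧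
    (∀ (k : ℕ) (η : Fin N → ℝ),
      (Pcᵀ ^ k).mulVec (χᵀ.mulVec η) = χᵀ.mulVec ((Pᵀ ^ k).mulVec η)) := by
  have hdet : IsUnit A.det := (Matrix.isUnit_iff_isUnit_det A).mp hA
  have hdetT : IsUnit Aᵀ.det := by rwa [Matrix.det_transpose]
  have h1 : χᵀ * D ^ 2 * χ = Aᵀ * A := by
    rw [hχ, Matrix.transpose_mul]
    calc Aᵀ * Xᵀ * D ^ 2 * (X * A) = Aᵀ * (Xᵀ * D ^ 2 * X) * A := by
          simp only [Matrix.mul_assoc]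
      _ = Aᵀ * A := by rw [horth, Matrix.mul_one]
  have h2 : χᵀ * D ^ 2 * P * χ = Aᵀ * (Λ * A) := by
    rw [hχ, Matrix.transpose_mul]
    calc Aᵀ * Xᵀ * D ^ 2 * P * (X * A)
        = Aᵀ * (Xᵀ * D ^ 2 * (P * X) * A) := by simp only [Matrix.mul_assoc]
      _ = Aᵀ * (Xᵀ * D ^ 2 * X * (Λ * A)) := by rw [hinv]; simp only [Matrix.mul_assoc]
      _ = Aᵀ * (Λ * A) := by rw [horth, Matrix.one_mul]
  have hPcA : Pc = A⁻¹ * (Λ * A) := by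
    rw [hPc, h1, h2, Matrix.mul_inv_rev, Matrix.mul_assoc, ← Matrix.mul_assoc Aᵀ⁻¹,
      Matrix.nonsing_inv_mul _ hdetT, Matrix.one_mul]
  have key : P * χ = χ * Pc := by
    rw [hχ, hPcA, ← Matrix.mul_assoc, hinv, Matrix.mul_assoc X A, ← Matrix.mul_assoc A,
      Matrix.mul_nonsing_inv _ hdet, Matrix.one_mul, Matrix.mul_assoc]
  have hk : ∀ k : ℕ, P ^ k * χ = χ * Pc ^ k := by
    intro k
    induction k with
    | zero => simp
    | succ n ih =>
        rw [pow_succ', pow_succ, Matrix.mul_assoc, ih, ← Matrix.mul_assoc, key,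
          Matrix.mul_assoc, ← pow_succ', pow_succ]
  refine ⟨key, hk, fun k η => ?_⟩
  have := congrArg Matrix.transpose (hk k)
  rw [Matrix.transpose_mul, Matrix.transpose_mul, Matrix.transpose_pow,
    Matrix.transpose_pow] at this
  rw [Matrix.mulVec_mulVec, Matrix.mulVec_mulVec, ← this]
end
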